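/- arXiv:1509.00273 — 2 statements merged into one kernel-verified Lean document; each statement's English description precedes it below -/
import Mathlib

section
/- Let 1 < p < ∞ and let w be a weight on ℝ with σ := w^{1−p'} locally integrable. Then ‖S‖_{L^p(w)→L^{p,∞}(w)} ≥ [w]_{A_p}^{1/p}, where S is the Haar square function and [w]_{A_p} is taken over dyadic intervals. -/
/-!
Test the weak-type inequality on `f = σ · (1_{I₋} - 1_{I₊})` for a dyadic interval `I`.
Since `σ ^ p * w = σ`, `‖f‖_{L^p(w)} = σ(I)^{1/p}`, while `⟨h_I, f⟩ = |I|^{-1/2} σ(I)`, so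
`Sf ≥ ⟨σ⟩_I` on `I`. The weak-type bound then gives `⟨σ⟩_I w(I)^{1/p} ≤ C σ(I)^{1/p}`; raising
to the power `p` and dividing by `σ(I) = |I| ⟨σ⟩_I` yields `⟨w⟩_I ⟨σ⟩_I^{p-1} ≤ C^p`.
-/

open MeasureTheory ENNReal NNReal Set

noncomputable section

namespace Paper1D

/-- The dyadic interval `[2^{-k} m, 2^{-k}(m+1))`. -/
def dyadicI (k m : ℤ) : Set ℝ := Set.Ico ((2:ℝ) ^ (-k) * m) ((2:ℝ) ^ (-k) * (m + 1))

/-- The Haar function `h_I = |I|^{-1/2} (1_{I_-} - 1_{I_+})` of the dyadic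
interval `I = [2^{-k} m, 2^{-k}(m+1))`. -/
def haar (k m : ℤ) (x : ℝ) : ℝ :=
  (2:ℝ) ^ ((k : ℝ) / 2) *
    (Set.indicator (Set.Ico ((2:ℝ) ^ (-k) * m) ((2:ℝ) ^ (-k) * (m + 1/2))) (fun _ => (1:ℝ)) x
      - Set.indicator (Set.Ico ((2:ℝ) ^ (-k) * (m + 1/2)) ((2:ℝ) ^ (-k) * (m + 1))) (fun _ => (1:ℝ)) x)

/-- The Haar square function `Sf = (∑_I (1_I/|I|) |⟨h_I, f⟩|²)^{1/2}`. -/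
def haarSq (f : ℝ → ℝ) (x : ℝ) : ℝ≥0∞ :=
  (∑' km : ℤ × ℤ, (dyadicI km.1 km.2).indicator
      (fun _ => (volume (dyadicI km.1 km.2))⁻¹ *
        (‖∫ y, haar km.1 km.2 y * f y‖₊ : ℝ≥0∞) ^ 2) x) ^ (1/2 : ℝ)

/-- `‖f‖_{L^p(w)} = (∫ |f|^p w)^{1/p}`. -/
def lpNorm1 (p : ℝ) (w : ℝ → ℝ≥0∞) (f : ℝ → ℝ) : ℝ≥0∞ :=
  (∫⁻ x, (‖f x‖₊ : ℝ≥0∞) ^ p * w x) ^ (1/p)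

/-- `‖g‖_{L^{p,∞}(w)} = sup_{t>0} t · w({g > t})^{1/p}`. -/
def wLpNorm1 (p : ℝ) (w : ℝ → ℝ≥0∞) (g : ℝ → ℝ≥0∞) : ℝ≥0∞ :=
  ⨆ (t : ℝ≥0) (_ : 0 < t), (t : ℝ≥0∞) * (∫⁻ x in {x | (t : ℝ≥0∞) < g x}, w x) ^ (1/p)

/-- `‖S‖_{L^p(w) → L^{p,∞}(w)}`, the least constant `C` such that
`‖Sf‖_{L^{p,∞}(w)} ≤ C ‖f‖_{L^p(w)}` for all `f ∈ L^p(w)`. -/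
def sqOpNorm (p : ℝ) (w : ℝ → ℝ≥0∞) : ℝ≥0∞ :=
  sInf {C : ℝ≥0∞ | ∀ f : ℝ → ℝ, Measurable f → lpNorm1 p w f ≠ ∞ →
    wLpNorm1 p w (haarSq f) ≤ C * lpNorm1 p w f}

/-- Average `⟨w⟩_I = |I|⁻¹ ∫_I w`. -/
def avg1 (w : ℝ → ℝ≥0∞) (I : Set ℝ) : ℝ≥0∞ := (volume I)⁻¹ * ∫⁻ x in I, w x

/-- The dyadic `A_p` characteristic, with the dual weight `σ = w^{1-p'}`. -/
def Ap1 (p : ℝ) (w : ℝ → ℝ≥0∞) : ℝ≥0∞ :=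
  ⨆ km : ℤ × ℤ, avg1 w (dyadicI km.1 km.2) *
    (avg1 (fun x => (w x) ^ (1 - p / (p - 1))) (dyadicI km.1 km.2)) ^ (p - 1)

def haarSign (k m : ℤ) : ℝ → ℝ :=
  (Ico ((2:ℝ) ^ (-k) * m) ((2:ℝ) ^ (-k) * (m + 1/2))).indicator 1
    - (Ico ((2:ℝ) ^ (-k) * (m + 1/2)) ((2:ℝ) ^ (-k) * (m + 1))).indicator 1

lemma haar_eq_mul_haarSign (k m : ℤ) (x : ℝ) :
    haar k m x = (2:ℝ) ^ ((k : ℝ) / 2) * haarSign k m x := rfl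

lemma measurable_haarSign (k m : ℤ) : Measurable (haarSign k m) :=
  (measurable_const.indicator measurableSet_Ico).sub (measurable_const.indicator measurableSet_Ico)

lemma measurableSet_dyadicI (k m : ℤ) : MeasurableSet (dyadicI k m) := measurableSet_Ico

lemma sq_indicator_Ico_sub_indicator_Ico {a b c : ℝ} (hab : a ≤ b) (hbc : b ≤ c) (x : ℝ) :
    ((Ico a b).indicator 1 x - (Ico b c).indicator 1 x : ℝ) ^ 2 = (Ico a c).indicator 1 x := by
  rw [← Ico_union_Ico_eq_Ico hab hbc]
  by_cases hxb : x < b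
  · simp [indicator, hxb, not_le.mpr hxb]
  · simp [indicator, hxb, le_trans hab (not_lt.mp hxb)]

lemma haarSign_sq (k m : ℤ) (x : ℝ) : haarSign k m x ^ 2 = (dyadicI k m).indicator 1 x := by
  have h2k : (0:ℝ) < (2:ℝ) ^ (-k) := zpow_pos two_pos _
  exact sq_indicator_Ico_sub_indicator_Ico (by nlinarith) (by nlinarith) x

lemma abs_haarSign (k m : ℤ) (x : ℝ) : |haarSign k m x| = (dyadicI k m).indicator 1 x := by
  have hsq := haarSign_sq k m x
  by_cases hx : x ∈ dyadicI k m
  · rw [indicator_of_mem hx, Pi.one_apply] at hsq ⊢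
    exact (pow_eq_one_iff_of_nonneg (abs_nonneg _) two_ne_zero).1 (by rw [sq_abs, hsq])
  · rw [indicator_of_notMem hx] at hsq ⊢
    exact abs_eq_zero.2 (pow_eq_zero_iff two_ne_zero |>.1 hsq)

lemma enorm_haarSign (k m : ℤ) (x : ℝ) : ‖haarSign k m x‖ₑ = (dyadicI k m).indicator 1 x := by
  rw [← Real.enorm_abs, abs_haarSign]
  by_cases hx : x ∈ dyadicI k m <;> simp [hx]

lemma volume_dyadicI (k m : ℤ) : volume (dyadicI k m) = ENNReal.ofReal ((2:ℝ) ^ (-k)) := by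
  rw [dyadicI, Real.volume_Ico]; ring_nf

lemma enorm_two_rpow_half_sq (k m : ℤ) :
    ‖(2:ℝ) ^ ((k : ℝ) / 2)‖ₑ ^ 2 = (volume (dyadicI k m))⁻¹ := by
  rw [volume_dyadicI, ← ENNReal.ofReal_inv_of_pos (zpow_pos two_pos _), ← zpow_neg, neg_neg,
    Real.enorm_eq_ofReal (by positivity), ← ENNReal.ofReal_pow (by positivity),
    ← Real.rpow_natCast, ← Real.rpow_mul zero_le_two, ← Real.rpow_intCast]
  norm_num

def dualWeight (p : ℝ) (w : ℝ → ℝ≥0∞) (x : ℝ) : ℝ≥0∞ := w x ^ (1 - p / (p - 1))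

lemma rpow_dualExp_rpow_mul_self {p : ℝ} (hp : 1 < p) {x : ℝ≥0∞}
    (hx : x ^ (1 - p / (p - 1)) ≠ ∞) :
    (x ^ (1 - p / (p - 1))) ^ p * x = x ^ (1 - p / (p - 1)) := by
  have hp1 : p - 1 ≠ 0 := by linarith
  have hexp : (1 - p / (p - 1)) * p + 1 = 1 - p / (p - 1) := by field_simp; ring
  have hneg : 1 - p / (p - 1) < 0 := by
    rw [sub_neg, one_lt_div (by linarith)]; linarith
  have hx0 : x ≠ 0 := by rintro rfl; exact hx (ENNReal.zero_rpow_of_neg hneg)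
  rcases eq_or_ne x ∞ with rfl | hx_top
  · rw [ENNReal.top_rpow_of_neg hneg, ENNReal.zero_rpow_of_pos (by linarith), zero_mul]
  · conv_rhs => rw [← hexp]
    rw [ENNReal.rpow_add _ _ hx0 hx_top, ENNReal.rpow_one, ENNReal.rpow_mul]

lemma lpNorm1_toReal_dualWeight_mul_haarSign {p : ℝ} (hp : 1 < p) {w : ℝ → ℝ≥0∞}
    (hw : Measurable w) (k m : ℤ) (hσ : ∫⁻ x in dyadicI k m, dualWeight p w x ≠ ∞) :
    lpNorm1 p w (fun x => (dualWeight p w x).toReal * haarSign k m x)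
      = (∫⁻ x in dyadicI k m, dualWeight p w x) ^ (1/p) := by
  have hσ_fin : ∀ᵐ x, x ∈ dyadicI k m → dualWeight p w x ≠ ∞ :=
    (ae_restrict_iff' (measurableSet_dyadicI k m)).1
      ((ae_lt_top (hw.pow_const _) hσ).mono fun _ => ne_of_lt)
  rw [lpNorm1, ← lintegral_indicator (measurableSet_dyadicI k m)]
  congr 1
  refine lintegral_congr_ae (hσ_fin.mono fun x hx => ?_)
  dsimp only
  rw [← enorm_eq_nnnorm, enorm_mul, enorm_haarSign]
  by_cases hxI : x ∈ dyadicI k m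
  · rw [indicator_of_mem hxI, indicator_of_mem hxI, Pi.one_apply, mul_one,
      Real.enorm_toReal (hx hxI)]
    exact rpow_dualExp_rpow_mul_self hp (hx hxI)
  · rw [indicator_of_notMem hxI, indicator_of_notMem hxI, mul_zero,
      ENNReal.zero_rpow_of_pos (by linarith), zero_mul]

lemma integral_haar_mul_toReal_mul_haarSign {s : ℝ → ℝ≥0∞} (hs : Measurable s) (k m : ℤ)
    (hsI : ∫⁻ x in dyadicI k m, s x ≠ ∞) :
    ∫ y, haar k m y * ((s y).toReal * haarSign k m y)
      = (2:ℝ) ^ ((k : ℝ) / 2) * (∫⁻ x in dyadicI k m, s x).toReal := by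
  have hpt : ∀ y, haar k m y * ((s y).toReal * haarSign k m y)
      = (2:ℝ) ^ ((k : ℝ) / 2) * (dyadicI k m).indicator (fun y => (s y).toReal) y := by
    intro y
    rw [haar_eq_mul_haarSign, mul_mul_mul_comm, ← sq, haarSign_sq]
    by_cases hy : y ∈ dyadicI k m <;> simp [hy]
  simp_rw [hpt]
  rw [integral_const_mul, integral_indicator (measurableSet_dyadicI k m),
    integral_toReal hs.aemeasurable (ae_lt_top hs hsI)]

lemma le_haarSq_of_mem (f : ℝ → ℝ) {k m : ℤ} {x : ℝ} (hx : x ∈ dyadicI k m) :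
    ((volume (dyadicI k m))⁻¹ * (‖∫ y, haar k m y * f y‖₊ : ℝ≥0∞) ^ 2) ^ (1/2 : ℝ)
      ≤ haarSq f x := by
  refine ENNReal.rpow_le_rpow ?_ (by norm_num)
  have := ENNReal.le_tsum (f := fun km : ℤ × ℤ => (dyadicI km.1 km.2).indicator
      (fun _ => (volume (dyadicI km.1 km.2))⁻¹ *
        (‖∫ y, haar km.1 km.2 y * f y‖₊ : ℝ≥0∞) ^ 2) x) (k, m)
  rwa [indicator_of_mem hx] at this

lemma mul_rpow_le_wLpNorm1 {p : ℝ} (hp : 0 ≤ p) (w : ℝ → ℝ≥0∞) {g : ℝ → ℝ≥0∞} {E : Set ℝ}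
    {b : ℝ≥0∞} (hb : ∀ x ∈ E, b ≤ g x) :
    b * (∫⁻ x in E, w x) ^ (1/p) ≤ wLpNorm1 p w g := by
  refine ENNReal.mul_le_of_forall_lt fun t ht W hW => ?_
  lift t to ℝ≥0 using ht.ne_top
  rcases eq_or_ne t 0 with rfl | ht0
  · simp
  calc (t : ℝ≥0∞) * W ≤ t * (∫⁻ x in {x | (t : ℝ≥0∞) < g x}, w x) ^ (1/p) := by
        gcongr
        exact hW.le.trans (ENNReal.rpow_le_rpow
          (lintegral_mono_set fun x hx => ht.trans_le (hb x hx)) (by positivity))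
    _ ≤ wLpNorm1 p w g := le_iSup₂ (f := fun (t : ℝ≥0) (_ : 0 < t) => (t : ℝ≥0∞) *
          (∫⁻ x in {x | (t : ℝ≥0∞) < g x}, w x) ^ (1/p)) t (pos_iff_ne_zero.2 ht0)

lemma inv_mul_mul_inv_mul_rpow_sub_one_le {p : ℝ} (hp : 1 < p) {V A W C : ℝ≥0∞} (hV : V ≠ 0)
    (hA : A ≠ ∞) (h : V⁻¹ * A * W ^ (1/p) ≤ C * A ^ (1/p)) :
    V⁻¹ * W * (V⁻¹ * A) ^ (p - 1) ≤ C ^ p := by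
  have hp0 : 0 < p := by linarith
  set B := V⁻¹ * A with hB
  rcases eq_or_ne B 0 with hB0 | hB0
  · rw [hB0, ENNReal.zero_rpow_of_pos (by linarith), mul_zero]; exact zero_le
  have hA0 : A ≠ 0 := by rintro rfl; exact hB0 (mul_zero _)
  have hBtop : B ≠ ∞ := ENNReal.mul_ne_top (ENNReal.inv_ne_top.2 hV) hA
  have hpow : B ^ p * W ≤ C ^ p * A := by
    have hcancel (x y : ℝ≥0∞) : (x * y ^ (1/p)) ^ p = x ^ p * y := by
      rw [ENNReal.mul_rpow_of_nonneg _ _ hp0.le, ← ENNReal.rpow_mul, one_div_mul_cancel hp0.ne',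
        ENNReal.rpow_one]
    simpa only [hcancel] using ENNReal.rpow_le_rpow h hp0.le
  refine (ENNReal.mul_le_mul_iff_left hA0 hA).1 ?_
  calc V⁻¹ * W * B ^ (p - 1) * A = B ^ (p - 1 + 1) * W := by
        rw [ENNReal.rpow_add _ _ hB0 hBtop, ENNReal.rpow_one, hB]; ring
    _ ≤ C ^ p * A := by rwa [sub_add_cancel]

def HaarSqWeakBound (p : ℝ) (w : ℝ → ℝ≥0∞) (C : ℝ≥0∞) : Prop :=
  ∀ f : ℝ → ℝ, Measurable f → lpNorm1 p w f ≠ ∞ → wLpNorm1 p w (haarSq f) ≤ C * lpNorm1 p w f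

lemma avg1_mul_avg1_dualWeight_rpow_le {p : ℝ} (hp : 1 < p) {w : ℝ → ℝ≥0∞} (hw : Measurable w)
    {C : ℝ≥0∞} (hC : HaarSqWeakBound p w C) (k m : ℤ)
    (hσ : ∫⁻ x in dyadicI k m, dualWeight p w x ≠ ∞) :
    avg1 w (dyadicI k m) * avg1 (dualWeight p w) (dyadicI k m) ^ (p - 1) ≤ C ^ p := by
  set I := dyadicI k m
  set A := ∫⁻ x in I, dualWeight p w x
  set f : ℝ → ℝ := fun x => (dualWeight p w x).toReal * haarSign k m x
  have hf_meas : Measurable f := (hw.pow_const _).ennreal_toReal.mul (measurable_haarSign k m)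
  have hf_norm : lpNorm1 p w f = A ^ (1/p) := lpNorm1_toReal_dualWeight_mul_haarSign hp hw k m hσ
  have hf_coeff : (volume I)⁻¹ * (‖∫ y, haar k m y * f y‖₊ : ℝ≥0∞) ^ 2
      = ((volume I)⁻¹ * A) ^ 2 := by
    have hf_int : ∫ y, haar k m y * f y = (2:ℝ) ^ ((k : ℝ) / 2) * A.toReal :=
      integral_haar_mul_toReal_mul_haarSign (s := dualWeight p w) (hw.pow_const _) k m hσ
    rw [hf_int, ← enorm_eq_nnnorm,
      enorm_mul, Real.enorm_toReal hσ, mul_pow, enorm_two_rpow_half_sq k m]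
    ring
  have hroot : (((volume I)⁻¹ * A) ^ 2) ^ (1/2 : ℝ) = (volume I)⁻¹ * A := by
    simpa using ENNReal.pow_rpow_inv_natCast two_ne_zero _
  have hSf : ∀ x ∈ I, (volume I)⁻¹ * A ≤ haarSq f x := fun x hx => by
    rw [← hroot, ← hf_coeff]
    exact le_haarSq_of_mem f hx
  refine inv_mul_mul_inv_mul_rpow_sub_one_le hp ?_ hσ ?_
  · rw [volume_dyadicI]; exact (ENNReal.ofReal_pos.2 (zpow_pos two_pos _)).ne'
  rw [← hf_norm]
  exact (mul_rpow_le_wLpNorm1 (by linarith) w hSf).trans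
    (hC f hf_meas (hf_norm ▸ ENNReal.rpow_ne_top_of_nonneg (by positivity) hσ))

theorem statement16_general (p : ℝ) (hp : 1 < p) (w : ℝ → ℝ≥0∞) (hw : Measurable w)
    (hσloc : ∀ k m : ℤ, (∫⁻ x in dyadicI k m, (w x) ^ (1 - p / (p - 1))) < ∞) :
    (Ap1 p w) ^ (1 / p) ≤ sqOpNorm p w := by
  refine le_sInf fun C (hC : HaarSqWeakBound p w C) => ?_
  have hAp : Ap1 p w ≤ C ^ p := iSup_le fun km =>
    avg1_mul_avg1_dualWeight_rpow_le hp hw hC km.1 km.2 (hσloc km.1 km.2).ne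
  rw [one_div]
  exact (ENNReal.rpow_inv_le_iff (by linarith)).2 hAp

/-- Proposition 5.1: `‖S‖_{L^p(w)→L^{p,∞}(w)} ≥ [w]_{A_p}^{1/p}` for every weight `w`. -/
theorem statement16 (p : ℝ) (hp : 1 < p) (w : ℝ → ℝ≥0∞) (hw : Measurable w)
    (hwloc : ∀ k m : ℤ, (∫⁻ x in dyadicI k m, w x) < ∞)
    (hσloc : ∀ k m : ℤ, (∫⁻ x in dyadicI k m, (w x) ^ (1 - p / (p - 1))) < ∞) :
    (Ap1 p w) ^ (1 / p) ≤ sqOpNorm p w :=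
  statement16_general p hp w hw hσloc

end Paper1D
end
end

section
/- Let 1 < p < ∞. There exist constants c, C > 0 depending only on p such that for every ε ∈ (0,1), the weight w(x) := |x|^{ε−1} on ℝ satisfies c·ε^{−1} ≤ [w]_{A_p} ≤ C·ε^{−1}, where [w]_{A_p} := sup over all bounded intervals I of ⟨w⟩_I ⟨w^{1−p'}⟩_I^{p−1}. -/
open MeasureTheory ENNReal NNReal Set

noncomputable section

namespace Paper1D

/-!
Write the interval as `[m - r, m + r]`. If `|m| ≥ 2r`, then `|x| ≈ |m|` on it up to a factor 3,
so both averages are comparable to point values and the `A_p` product is at most `3^{1-ε}`.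
Otherwise the interval lies in `[-3r, 3r]`, and the explicit integrals
`∫_{-R}^{R} |x|^t = 2R^{t+1}/(t+1)` bound the product by `3^p/ε`; the factor `1/ε` is the
integral of `|x|^{ε-1}` near the origin. The interval `[0, 1]` shows this is sharp:
there `⟨w⟩ = 1/ε` and `⟨w^{1-p'}⟩ = (p-1)/(p-ε)`.
-/

lemma avg1_congr_set {I J : Set ℝ} (h : I =ᵐ[volume] J) (f : ℝ → ℝ≥0∞) :
    avg1 f I = avg1 f J := by
  rw [avg1, avg1, measure_congr h, setLIntegral_congr h]

lemma avg1_congr_ae {f g : ℝ → ℝ≥0∞} (h : f =ᵐ[volume] g) (I : Set ℝ) :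
    avg1 f I = avg1 g I := by
  rw [avg1, avg1, lintegral_congr_ae (ae_restrict_of_ae h)]

lemma avg1_of_measure_zero {I : Set ℝ} (h : volume I = 0) (f : ℝ → ℝ≥0∞) :
    avg1 f I = 0 := by
  rw [avg1, Measure.restrict_eq_zero.2 h, lintegral_zero_measure, mul_zero]

lemma avg1_le_of_forall_le {I : Set ℝ} (hI : MeasurableSet I) (hI' : volume I ≠ ∞)
    {f : ℝ → ℝ≥0∞} {c : ℝ≥0∞} (h : ∀ x ∈ I, f x ≤ c) : avg1 f I ≤ c := by
  by_cases h0 : volume I = 0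
  · simp [avg1_of_measure_zero h0]
  calc avg1 f I ≤ (volume I)⁻¹ * ∫⁻ _ in I, c :=
        mul_le_mul_right (setLIntegral_mono' hI h) _
    _ = c := by
        rw [setLIntegral_const, mul_comm c, ← mul_assoc, ENNReal.inv_mul_cancel h0 hI', one_mul]

lemma _root_.Set.OrdConnected.ae_eq_Icc_csInf_csSup {I : Set ℝ} (hI : I.OrdConnected)
    (hb : Bornology.IsBounded I) : I =ᵐ[volume] Icc (sInf I) (sSup I) := by
  rcases I.eq_empty_or_nonempty with rfl | hne
  · simpa using (ae_eq_empty.2 (measure_singleton (0 : ℝ))).symm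
  refine ae_eq_of_subset_of_measure_ge (subset_Icc_csInf_csSup hb.bddBelow hb.bddAbove) ?_
    hI.measurableSet.nullMeasurableSet measure_Icc_lt_top.ne
  rw [Real.volume_Icc, ← Real.volume_Ioo]
  exact measure_mono (IsConnected.Ioo_csInf_csSup_subset ⟨hne, hI.isPreconnected⟩
    hb.bddBelow hb.bddAbove)

lemma ofReal_mul_rpow_le {a b : ℝ≥0∞} {A B q : ℝ} (hA : a ≤ ENNReal.ofReal A)
    (hB : b ≤ ENNReal.ofReal B) (hB0 : 0 ≤ B) (hq : 0 ≤ q) :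
    a * b ^ q ≤ ENNReal.ofReal (A * B ^ q) := by
  calc a * b ^ q ≤ ENNReal.ofReal A * ENNReal.ofReal B ^ q := by gcongr
    _ = ENNReal.ofReal (A * B ^ q) := by
        rw [ENNReal.ofReal_rpow_of_nonneg hB0 hq, ENNReal.ofReal_mul' (by positivity)]

lemma setLIntegral_Icc_zero_abs_rpow {R t : ℝ} (hR : 0 ≤ R) (ht : -1 < t) :
    ∫⁻ x in Icc 0 R, ENNReal.ofReal (|x| ^ t) = ENNReal.ofReal (R ^ (t + 1) / (t + 1)) := by
  have habs : EqOn (fun x : ℝ => |x| ^ t) (fun x => x ^ t) (Icc 0 R) :=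
    fun x hx => by simp only [abs_of_nonneg hx.1]
  have hint : IntegrableOn (fun x : ℝ => |x| ^ t) (Icc 0 R) := by
    refine ((integrableOn_Icc_iff_integrableOn_Ioc).2 ?_).congr_fun habs.symm measurableSet_Icc
    exact (intervalIntegrable_iff_integrableOn_Ioc_of_le hR).1
      (intervalIntegral.intervalIntegrable_rpow' ht)
  rw [← ofReal_integral_eq_lintegral_ofReal hint
    (Filter.Eventually.of_forall fun x => by positivity),
    setIntegral_congr_fun measurableSet_Icc habs, integral_Icc_eq_integral_Ioc,
    ← intervalIntegral.integral_of_le hR, integral_rpow (Or.inl ht), Real.zero_rpow (by linarith),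
    sub_zero]

lemma setLIntegral_Icc_abs_rpow_le {R t : ℝ} (hR : 0 ≤ R) (ht : -1 < t) :
    ∫⁻ x in Icc (-R) R, ENNReal.ofReal (|x| ^ t)
      ≤ ENNReal.ofReal (2 * (R ^ (t + 1) / (t + 1))) := by
  have hneg : ∫⁻ x in Icc (-R) 0, ENNReal.ofReal (|x| ^ t)
      = ∫⁻ x in Icc 0 R, ENNReal.ofReal (|x| ^ t) := by
    rw [← (Measure.measurePreserving_neg volume).setLIntegral_comp_preimage_emb
      (Homeomorph.neg ℝ).measurableEmbedding]
    simp [abs_neg]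
  have hint := setLIntegral_Icc_zero_abs_rpow hR ht
  have hnn : 0 ≤ R ^ (t + 1) / (t + 1) := div_nonneg (by positivity) (by linarith)
  calc ∫⁻ x in Icc (-R) R, ENNReal.ofReal (|x| ^ t)
      ≤ (∫⁻ x in Icc (-R) 0, ENNReal.ofReal (|x| ^ t)) +
          ∫⁻ x in Icc 0 R, ENNReal.ofReal (|x| ^ t) := by
        rw [← Icc_union_Icc_eq_Icc (neg_nonpos.2 hR) hR]
        exact lintegral_union_le _ _ _
    _ = ENNReal.ofReal (2 * (R ^ (t + 1) / (t + 1))) := by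
        rw [hneg, hint, two_mul, ENNReal.ofReal_add hnn hnn]

-- Only a.e.: at `x = 0` the left side is `0 ^ b`, which is `⊤` when `b < 0`.
lemma ofReal_abs_rpow_rpow_ae_eq (a b : ℝ) :
    (fun x : ℝ => ENNReal.ofReal (|x| ^ a) ^ b) =ᵐ[volume]
      fun x => ENNReal.ofReal (|x| ^ (a * b)) := by
  filter_upwards [compl_mem_ae_iff.2 (measure_singleton (0 : ℝ))] with x hx
  have hx0 : 0 < |x| := abs_pos.2 hx
  rw [ENNReal.ofReal_rpow_of_pos (by positivity), Real.rpow_mul hx0.le]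

lemma avg1_abs_rpow_mul_rpow_le_of_two_mul_le_abs {m r t s q : ℝ} (hr : 0 < r)
    (hm : 2 * r ≤ |m|) (ht : t ≤ 0) (hs : 0 ≤ s) (hq : 0 ≤ q) (hts : t + s * q = 0) :
    avg1 (fun x => ENNReal.ofReal (|x| ^ t)) (Icc (m - r) (m + r)) *
        avg1 (fun x => ENNReal.ofReal (|x| ^ s)) (Icc (m - r) (m + r)) ^ q
      ≤ ENNReal.ofReal (3 ^ (-t)) := by
  set M := |m| / 2 with hM_def
  have hM : 0 < M := by linarith
  have hbounds : ∀ x ∈ Icc (m - r) (m + r), M ≤ |x| ∧ |x| ≤ 3 * M := by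
    intro x hx
    have hxm : |x - m| ≤ r := abs_sub_le_iff.2 ⟨by linarith [hx.2], by linarith [hx.1]⟩
    have h₁ := abs_sub_abs_le_abs_sub x m
    have h₂ := abs_sub_abs_le_abs_sub m x
    rw [abs_sub_comm m x] at h₂
    constructor <;> linarith
  have hw : avg1 (fun x => ENNReal.ofReal (|x| ^ t)) (Icc (m - r) (m + r))
      ≤ ENNReal.ofReal (M ^ t) :=
    avg1_le_of_forall_le measurableSet_Icc measure_Icc_lt_top.ne fun x hx =>
      ENNReal.ofReal_le_ofReal (Real.rpow_le_rpow_of_nonpos hM (hbounds x hx).1 ht)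
  have hσ : avg1 (fun x => ENNReal.ofReal (|x| ^ s)) (Icc (m - r) (m + r))
      ≤ ENNReal.ofReal ((3 * M) ^ s) :=
    avg1_le_of_forall_le measurableSet_Icc measure_Icc_lt_top.ne fun x hx =>
      ENNReal.ofReal_le_ofReal (Real.rpow_le_rpow (abs_nonneg x) (hbounds x hx).2 hs)
  refine (ofReal_mul_rpow_le hw hσ (by positivity) hq).trans_eq ?_
  rw [← Real.rpow_mul (by positivity), show s * q = -t by linarith,
    Real.mul_rpow (by norm_num) hM.le, Real.rpow_neg hM.le]
  field_simp

lemma avg1_abs_rpow_mul_rpow_le_of_abs_lt {m r t s q : ℝ} (hr : 0 < r)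
    (hm : |m| < 2 * r) (ht : -1 < t) (hs : 0 ≤ s) (hq : 0 ≤ q) (hts : t + s * q = 0) :
    avg1 (fun x => ENNReal.ofReal (|x| ^ t)) (Icc (m - r) (m + r)) *
        avg1 (fun x => ENNReal.ofReal (|x| ^ s)) (Icc (m - r) (m + r)) ^ q
      ≤ ENNReal.ofReal (3 ^ (1 + q) / (t + 1)) := by
  have hsub : Icc (m - r) (m + r) ⊆ Icc (-(3 * r)) (3 * r) :=
    Icc_subset_Icc (by linarith [neg_abs_le m]) (by linarith [le_abs_self m])
  have havg : ∀ u, -1 < u → avg1 (fun x => ENNReal.ofReal (|x| ^ u)) (Icc (m - r) (m + r))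
      ≤ ENNReal.ofReal (3 * (3 * r) ^ u / (u + 1)) := by
    intro u hu
    calc avg1 (fun x => ENNReal.ofReal (|x| ^ u)) (Icc (m - r) (m + r))
        ≤ (ENNReal.ofReal (2 * r))⁻¹ * ENNReal.ofReal (2 * ((3 * r) ^ (u + 1) / (u + 1))) := by
          rw [avg1, Real.volume_Icc, show m + r - (m - r) = 2 * r by ring]
          exact mul_le_mul_right ((lintegral_mono_set hsub).trans
            (setLIntegral_Icc_abs_rpow_le (by positivity) hu)) _
      _ = ENNReal.ofReal (3 * (3 * r) ^ u / (u + 1)) := by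
          rw [← ENNReal.ofReal_inv_of_pos (by positivity), ← ENNReal.ofReal_mul (by positivity),
            Real.rpow_add_one (by positivity)]
          congr 1
          field_simp
  have hσ : avg1 (fun x => ENNReal.ofReal (|x| ^ s)) (Icc (m - r) (m + r))
      ≤ ENNReal.ofReal (3 * (3 * r) ^ s) :=
    (havg s (by linarith)).trans
      (ENNReal.ofReal_le_ofReal (div_le_self (by positivity) (by linarith)))
  refine (ofReal_mul_rpow_le (havg t ht) hσ (by positivity) hq).trans_eq ?_
  have h3r : 0 ≤ 3 * r := by positivity
  rw [Real.mul_rpow (x := 3) (y := (3 * r) ^ s) (by norm_num) (by positivity),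
    ← Real.rpow_mul h3r, show s * q = -t by linarith, Real.rpow_neg h3r,
    Real.rpow_add (x := 3) (by norm_num), Real.rpow_one]
  field_simp

lemma avg1_abs_rpow_mul_rpow_Icc_le {a b t s q : ℝ} (ht : -1 < t) (ht₀ : t ≤ 0) (hs : 0 ≤ s)
    (hq : 0 ≤ q) (hts : t + s * q = 0) :
    avg1 (fun x => ENNReal.ofReal (|x| ^ t)) (Icc a b) *
        avg1 (fun x => ENNReal.ofReal (|x| ^ s)) (Icc a b) ^ q
      ≤ ENNReal.ofReal (3 ^ (1 + q) / (t + 1)) := by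
  rcases le_or_gt b a with hba | hab
  · rw [avg1_of_measure_zero (by simp [Real.volume_Icc, hba]), zero_mul]
    positivity
  obtain ⟨m, r, hr, rfl, rfl⟩ : ∃ m r, 0 < r ∧ a = m - r ∧ b = m + r :=
    ⟨(a + b) / 2, (b - a) / 2, by linarith, by ring, by ring⟩
  rcases le_or_gt (2 * r) |m| with hm | hm
  · refine (avg1_abs_rpow_mul_rpow_le_of_two_mul_le_abs hr hm ht₀ hs hq hts).trans
      (ENNReal.ofReal_le_ofReal ?_)
    calc (3 : ℝ) ^ (-t) ≤ 3 ^ (1 + q) :=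
          Real.rpow_le_rpow_of_exponent_le (by norm_num) (by linarith)
      _ ≤ 3 ^ (1 + q) / (t + 1) := le_div_self (by positivity) (by linarith) (by linarith)
  · exact avg1_abs_rpow_mul_rpow_le_of_abs_lt hr hm ht hs hq hts

lemma iSup_avg1_abs_rpow_mul_rpow_le {t s q : ℝ} (ht : -1 < t) (ht₀ : t ≤ 0) (hs : 0 ≤ s)
    (hq : 0 ≤ q) (hts : t + s * q = 0) :
    ⨆ (I : Set ℝ) (_ : I.OrdConnected ∧ Bornology.IsBounded I),
        avg1 (fun x => ENNReal.ofReal (|x| ^ t)) I *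
          avg1 (fun x => ENNReal.ofReal (|x| ^ s)) I ^ q
      ≤ ENNReal.ofReal (3 ^ (1 + q) / (t + 1)) := by
  refine iSup₂_le fun I ⟨hI, hb⟩ => ?_
  simp only [avg1_congr_set (hI.ae_eq_Icc_csInf_csSup hb)]
  exact avg1_abs_rpow_mul_rpow_Icc_le ht ht₀ hs hq hts

lemma avg1_abs_rpow_Icc_zero_one {t : ℝ} (ht : -1 < t) :
    avg1 (fun x => ENNReal.ofReal (|x| ^ t)) (Icc 0 1) = ENNReal.ofReal (t + 1)⁻¹ := by
  rw [avg1, Real.volume_Icc, sub_zero, ENNReal.ofReal_one, inv_one, one_mul,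
    setLIntegral_Icc_zero_abs_rpow zero_le_one ht, Real.one_rpow, one_div]

lemma ofReal_le_iSup_avg1_abs_rpow_mul_rpow {t s q : ℝ} (ht : -1 < t) (hs : -1 < s)
    (hq : 0 ≤ q) :
    ENNReal.ofReal ((t + 1)⁻¹ * (s + 1)⁻¹ ^ q) ≤
      ⨆ (I : Set ℝ) (_ : I.OrdConnected ∧ Bornology.IsBounded I),
        avg1 (fun x => ENNReal.ofReal (|x| ^ t)) I *
          avg1 (fun x => ENNReal.ofReal (|x| ^ s)) I ^ q := by
  refine le_iSup₂_of_le (Icc 0 1) ⟨ordConnected_Icc, Metric.isBounded_Icc 0 1⟩ ?_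
  rw [avg1_abs_rpow_Icc_zero_one ht, avg1_abs_rpow_Icc_zero_one hs,
    ENNReal.ofReal_rpow_of_nonneg (inv_pos.2 (by linarith)).le hq,
    ENNReal.ofReal_mul (inv_pos.2 (by linarith)).le]

/-- Section 5 example: the weight `w(x) = |x|^{ε-1}` on `ℝ` has `[w]_{A_p} ≃ ε⁻¹`,
the `A_p` characteristic being taken over all bounded intervals. -/
theorem statement18 (p : ℝ) (hp : 1 < p) :
    ∃ c C : ℝ≥0∞, 0 < c ∧ C ≠ ∞ ∧
      ∀ ε : ℝ, 0 < ε → ε < 1 →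
      ∀ w : ℝ → ℝ≥0∞, (w = fun x => ENNReal.ofReal (|x| ^ (ε - 1))) →
        c * (ENNReal.ofReal ε)⁻¹ ≤
            (⨆ (I : Set ℝ) (_ : I.OrdConnected ∧ Bornology.IsBounded I),
              avg1 w I * (avg1 (fun x => (w x) ^ (1 - p / (p - 1))) I) ^ (p - 1)) ∧
          (⨆ (I : Set ℝ) (_ : I.OrdConnected ∧ Bornology.IsBounded I),
              avg1 w I * (avg1 (fun x => (w x) ^ (1 - p / (p - 1))) I) ^ (p - 1))
            ≤ C * (ENNReal.ofReal ε)⁻¹ := by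
  have hp₁ : 0 < p - 1 := by linarith
  refine ⟨ENNReal.ofReal (((p - 1) / p) ^ (p - 1)), ENNReal.ofReal (3 ^ p),
    ENNReal.ofReal_pos.2 (by positivity), ENNReal.ofReal_ne_top, ?_⟩
  rintro ε hε₀ hε₁ w rfl
  have hexp : (ε - 1) * (1 - p / (p - 1)) = (1 - ε) / (p - 1) := by field_simp; ring
  have hs₀ : 0 ≤ (1 - ε) / (p - 1) := div_nonneg (by linarith) hp₁.le
  have hts : ε - 1 + (1 - ε) / (p - 1) * (p - 1) = 0 := by field_simp; ring
  simp only [avg1_congr_ae (ofReal_abs_rpow_rpow_ae_eq (ε - 1) (1 - p / (p - 1))), hexp]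
  rw [← ENNReal.ofReal_inv_of_pos hε₀, ← ENNReal.ofReal_mul (by positivity),
    ← ENNReal.ofReal_mul (by positivity)]
  constructor
  · refine le_trans (ENNReal.ofReal_le_ofReal ?_)
      (ofReal_le_iSup_avg1_abs_rpow_mul_rpow (by linarith) (by linarith) hp₁.le)
    have hs₁ : ((1 - ε) / (p - 1) + 1)⁻¹ = (p - 1) / (p - ε) := by field_simp; ring
    rw [sub_add_cancel, mul_comm, hs₁]
    gcongr <;> linarith
  · refine (iSup_avg1_abs_rpow_mul_rpow_le (by linarith) (by linarith) hs₀ hp₁.le hts).trans_eq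
      ?_
    rw [sub_add_cancel, add_sub_cancel, div_eq_mul_inv]

end Paper1D
end
end
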